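/- arXiv:2409.20402 — 2 statements merged into one kernel-verified Lean document; each statement's English description precedes it below -/
import Mathlib

section
/- For z ∈ U, one has 4ρ(z)/(|z|+1)^2 ≤ ρ(z)/|ρ(z,𝐢)|^2 ≤ 4 min{ ρ(z), |z|/(|z|^2+1) }; consequently ρ(z)/|ρ(z,𝐢)|^2 → 0 if and only if either ρ(z) → 0 or |z| → ∞. -/
/-! Writing `z_n = x + i y`, one has `ρ(z, 𝐢) = ((y + 1) - i x) / 2`, so
`4 |ρ(z, 𝐢)|² = x² + (y + 1)²`. This lies between `|z|² + 1` (because `|z'|² < y` on `U`) and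
`(|z| + 1)²` (because `x² + y² ≤ |z|²` and `y ≤ |z|`). Dividing `ρ(z) ≤ y ≤ |z|` by it gives the
two-sided bound, and the bound squeezes `ρ(z)/|ρ(z,𝐢)|²` to zero exactly when `ρ(z)` is small or
`|z|` is large. -/

open Complex MeasureTheory Filter ComplexConjugate

noncomputable section

abbrev Cm (m : ℕ) := Fin m → ℂ

/-- squared Euclidean norm of `z' ∈ ℂ^{n-1}` -/
def nsq {m : ℕ} (a : Cm m) : ℝ := ∑ j, Complex.normSq (a j)

/-- defining function `ρ(z) = Im z_n - |z'|²` of the Siegel upper half-space -/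
def rho {m : ℕ} (z : Cm m × ℂ) : ℝ := z.2.im - nsq z.1

/-- `ρ(z,w) = (i/2)(conj w_n - z_n) - z'·conj w'` -/
def rho2 {m : ℕ} (z w : Cm m × ℂ) : ℂ :=
  (I / 2) * (conj w.2 - z.2) - ∑ j, z.1 j * conj (w.1 j)

/-- the Siegel upper half-space `U` -/
def Siegel (m : ℕ) : Set (Cm m × ℂ) := {z | 0 < rho z}

/-- the point `𝐢 = (0', i)` -/
def iPt (m : ℕ) : Cm m × ℂ := (0, I)

/-- Euclidean norm of a point of ℂⁿ = ℂ^{n-1} × ℂ -/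
def normz {m : ℕ} (z : Cm m × ℂ) : ℝ := Real.sqrt (nsq z.1 + Complex.normSq z.2)

open Topology

section Convergence

variable {α : Type*} {l : Filter α} {f r N : α → ℝ}

theorem eventually_lt_or_lt_of_tendsto_zero (hN : ∀ k, 0 ≤ N k)
    (hf : ∀ k, 4 * r k / (N k + 1) ^ 2 ≤ f k) (h : Tendsto f l (𝓝 0)) :
    ∀ ε > (0 : ℝ), ∀ᶠ k in l, r k < ε ∨ 1 / ε < N k := by
  intro ε hε
  -- the lower bound `4 r / (N + 1)²` evaluated at `r = ε`, `N = 1 / ε`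
  filter_upwards [h.eventually_lt_const (by positivity : 0 < 4 * ε / (1 / ε + 1) ^ 2)] with k hk
  by_contra! ⟨hr_large, hN_small⟩
  have : 4 * ε / (1 / ε + 1) ^ 2 ≤ 4 * r k / (N k + 1) ^ 2 :=
    div_le_div₀ (by linarith) (by linarith) (by have := hN k; positivity)
      (by have := hN k; gcongr)
  linarith [hf k]

theorem tendsto_min_zero_of_eventually_lt_or_lt (hr : ∀ k, 0 ≤ r k) (hN : ∀ k, 0 ≤ N k)
    (h : ∀ ε > (0 : ℝ), ∀ᶠ k in l, r k < ε ∨ 1 / ε < N k) :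
    Tendsto (fun k => min (r k) (N k / (N k ^ 2 + 1))) l (𝓝 0) := by
  rw [Metric.tendsto_nhds]
  intro ε hε
  filter_upwards [h ε hε] with k hk
  rw [Real.dist_0_eq_abs, abs_of_nonneg (le_min (hr k) (by have := hN k; positivity))]
  rcases hk with hr_small | hN_large
  · exact (min_le_left _ _).trans_lt hr_small
  · have hN_pos : 0 < N k := (one_div_pos.2 hε).trans hN_large
    calc min (r k) (N k / (N k ^ 2 + 1)) ≤ N k / (N k ^ 2 + 1) := min_le_right _ _
      _ ≤ 1 / N k := by rw [div_le_div_iff₀ (by positivity) hN_pos]; linarith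
      _ < ε := (one_div_lt hN_pos hε).2 hN_large

end Convergence

section Siegel

variable {m : ℕ} {z : Cm m × ℂ}

theorem nsq_nonneg (a : Cm m) : 0 ≤ nsq a :=
  Finset.sum_nonneg fun _ _ => normSq_nonneg _

theorem normz_nonneg (z : Cm m × ℂ) : 0 ≤ normz z := Real.sqrt_nonneg _

theorem normz_sq (z : Cm m × ℂ) : normz z ^ 2 = nsq z.1 + z.2.re ^ 2 + z.2.im ^ 2 := by
  rw [normz, Real.sq_sqrt (add_nonneg (nsq_nonneg _) (normSq_nonneg _)), normSq_apply]
  ring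

theorem im_le_normz (z : Cm m × ℂ) : z.2.im ≤ normz z := by
  apply Real.le_sqrt_of_sq_le
  rw [normSq_apply]
  nlinarith [nsq_nonneg z.1, sq_nonneg z.2.re]

theorem rho_le_im (z : Cm m × ℂ) : rho z ≤ z.2.im := sub_le_self _ (nsq_nonneg z.1)

theorem nsq_lt_im (hz : z ∈ Siegel m) : nsq z.1 < z.2.im := sub_pos.1 hz

theorem four_mul_norm_rho2_iPt_sq (z : Cm m × ℂ) :
    4 * ‖rho2 z (iPt m)‖ ^ 2 = z.2.re ^ 2 + (z.2.im + 1) ^ 2 := by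
  have h : rho2 z (iPt m) = ⟨(z.2.im + 1) / 2, -z.2.re / 2⟩ := by
    apply Complex.ext <;> simp [rho2, iPt] <;> ring
  rw [h, Complex.sq_norm, normSq_mk]
  ring

theorem four_mul_norm_rho2_iPt_sq_le (z : Cm m × ℂ) :
    4 * ‖rho2 z (iPt m)‖ ^ 2 ≤ (normz z + 1) ^ 2 := by
  rw [four_mul_norm_rho2_iPt_sq]
  nlinarith [normz_sq z, nsq_nonneg z.1, im_le_normz z]

theorem normz_sq_add_one_le (hz : z ∈ Siegel m) :
    normz z ^ 2 + 1 ≤ 4 * ‖rho2 z (iPt m)‖ ^ 2 := by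
  rw [four_mul_norm_rho2_iPt_sq, normz_sq]
  nlinarith [nsq_lt_im hz, nsq_nonneg z.1]

theorem norm_rho2_iPt_sq_pos (hz : z ∈ Siegel m) : 0 < ‖rho2 z (iPt m)‖ ^ 2 := by
  nlinarith [normz_sq_add_one_le hz, sq_nonneg (normz z)]

theorem rho_div_norm_rho2_iPt_sq_nonneg (hz : z ∈ Siegel m) :
    0 ≤ rho z / ‖rho2 z (iPt m)‖ ^ 2 :=
  div_nonneg (le_of_lt hz) (norm_rho2_iPt_sq_pos hz).le

theorem four_mul_rho_div_le (hz : z ∈ Siegel m) :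
    4 * rho z / (normz z + 1) ^ 2 ≤ rho z / ‖rho2 z (iPt m)‖ ^ 2 := by
  calc 4 * rho z / (normz z + 1) ^ 2 = rho z / ((normz z + 1) ^ 2 / 4) := by
        rw [div_div_eq_mul_div, mul_comm]
    _ ≤ rho z / ‖rho2 z (iPt m)‖ ^ 2 := div_le_div_of_nonneg_left (le_of_lt hz)
        (norm_rho2_iPt_sq_pos hz) (by linarith [four_mul_norm_rho2_iPt_sq_le z])

theorem rho_div_le_four_mul_min (hz : z ∈ Siegel m) :
    rho z / ‖rho2 z (iPt m)‖ ^ 2 ≤ 4 * min (rho z) (normz z / (normz z ^ 2 + 1)) := by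
  have hD := normz_sq_add_one_le hz
  have hD_pos := norm_rho2_iPt_sq_pos hz
  have hρ : 0 < rho z := hz
  rw [mul_min_of_nonneg _ _ zero_le_four]
  refine le_min ?_ ?_
  · rw [div_le_iff₀ hD_pos]
    nlinarith [sq_nonneg (normz z)]
  · calc rho z / ‖rho2 z (iPt m)‖ ^ 2 ≤ normz z / ‖rho2 z (iPt m)‖ ^ 2 := by
          gcongr; exact (rho_le_im z).trans (im_le_normz z)
      _ ≤ normz z / ((normz z ^ 2 + 1) / 4) :=
          div_le_div_of_nonneg_left (normz_nonneg z) (by positivity) (by linarith)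
      _ = 4 * (normz z / (normz z ^ 2 + 1)) := by field_simp

end Siegel

/-- two-sided bounds for `ρ(z)/|ρ(z,𝐢)|²`, and the resulting
characterization of convergence to the boundary at infinity. -/
theorem stmt2 (m : ℕ) :
    (∀ z ∈ Siegel m,
      4 * rho z / (normz z + 1) ^ 2 ≤ rho z / ‖rho2 z (iPt m)‖ ^ 2 ∧
      rho z / ‖rho2 z (iPt m)‖ ^ 2 ≤ 4 * min (rho z) (normz z / (normz z ^ 2 + 1))) ∧
    (∀ z : ℕ → Cm m × ℂ, (∀ k, z k ∈ Siegel m) →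
      (Tendsto (fun k => rho (z k) / ‖rho2 (z k) (iPt m)‖ ^ 2) atTop (nhds 0) ↔
        ∀ ε > (0 : ℝ), ∀ᶠ k in atTop, rho (z k) < ε ∨ 1 / ε < normz (z k))) := by
  refine ⟨fun z hz => ⟨four_mul_rho_div_le hz, rho_div_le_four_mul_min hz⟩, fun z hz => ⟨?_, ?_⟩⟩
  · exact eventually_lt_or_lt_of_tendsto_zero (fun k => normz_nonneg (z k))
      (fun k => four_mul_rho_div_le (hz k))
  · intro h
    have hmin := tendsto_min_zero_of_eventually_lt_or_lt (fun k => le_of_lt (hz k))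
      (fun k => normz_nonneg (z k)) h
    refine squeeze_zero (fun k => rho_div_norm_rho2_iPt_sq_nonneg (hz k))
      (fun k => rho_div_le_four_mul_min (hz k)) ?_
    simpa using hmin.const_mul 4
end
end

section
/- Let λ > -1 and f ∈ A_λ^1(U) (i.e. f holomorphic with ∫_U |f| dV_λ < ∞ and satisfying f = P_λ f). Then ∫_U f(z) dV_λ(z) = 0. -/
open Complex MeasureTheory Filter ComplexConjugate

noncomputable section

/-!
For `z = (z', ζ) ∈ U` the reproducing formula writes `x ↦ f (z', x + ζ)` as the integral over
`w ∈ U` of `(B_w - i x / 2) ^ (-s)` against `f(w) ρ(w)^λ`, where `B_w = ρ(z, w)` and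
`s = n + 1 + λ > 1`. Since `Re ρ(z, w) ≥ (ρ(z) + ρ(w)) / 2 ≥ ρ(z) / 2`, the `L¹` norm in `x` of
`(B_w - i x / 2) ^ (-s)`, which is `(Re B_w) ^ (1 - s)` times a constant, is bounded uniformly in
`w`, so Fubini applies; and the `x`-integral of `(B - i x / 2) ^ (-s)` vanishes because its
antiderivative `(2 i / (1 - s)) (B - i x / 2) ^ (1 - s)` tends to `0` at `±∞`. Hence `f`
integrates to zero along every horizontal line `x ↦ (z', x + ζ)`; as `ρ` is constant on these
lines, integrating over `(z', Im ζ)` gives `∫_U f dV_λ = 0`.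
-/

open Topology

section Line

variable {B : ℂ} {s : ℝ}

lemma re_sub_I_div_two_mul (B : ℂ) (t : ℝ) : (B - I / 2 * t).re = B.re := by
  simp

lemma sub_I_div_two_mul_mem_slitPlane (hB : 0 < B.re) (t : ℝ) : B - I / 2 * t ∈ slitPlane :=
  mem_slitPlane_iff.mpr (Or.inl (by rwa [re_sub_I_div_two_mul]))

lemma norm_cpow_neg_real (z : ℂ) (s : ℝ) : ‖z ^ (-(s : ℂ))‖ = ‖z‖ ^ (-s) := by
  rw [← ofReal_neg, norm_cpow_real]

lemma integrable_norm_one_sub_I_div_two_mul_rpow (hs : 1 < s) :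
    Integrable fun t : ℝ => ‖1 - I / 2 * t‖ ^ (-s) := by
  have hJ : Integrable fun u : ℝ => ((1 : ℝ) + ‖u‖ ^ 2) ^ (-s / 2) :=
    integrable_rpow_neg_one_add_norm_sq (by simpa using hs)
  refine (hJ.comp_div two_ne_zero).congr (Eventually.of_forall fun t => ?_)
  have hsq : ‖1 - I / 2 * (t : ℂ)‖ ^ 2 = 1 + ‖t / 2‖ ^ 2 := by
    rw [← normSq_eq_norm_sq, normSq_apply, Real.norm_eq_abs, sq_abs]
    simp only [sub_re, one_re, mul_re, div_re, I_re, I_im, ofReal_re, ofReal_im, sub_im,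
      one_im, mul_im, div_im, re_ofNat, im_ofNat, normSq_ofNat]
    ring
  dsimp only
  rw [← hsq, ← Real.rpow_natCast, ← Real.rpow_mul (norm_nonneg _)]
  congr 1
  ring

lemma sub_I_div_two_mul_eq_mul (hB : 0 < B.re) (t : ℝ) :
    B - I / 2 * t = B.re * (1 - I / 2 * ((t - 2 * B.im) / B.re : ℝ)) := by
  have : (B.re : ℂ) ≠ 0 := ofReal_ne_zero.mpr hB.ne'
  conv_lhs => rw [← re_add_im B]
  push_cast
  field_simp
  ring

lemma norm_sub_I_div_two_mul_rpow (hB : 0 < B.re) (t : ℝ) :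
    ‖B - I / 2 * t‖ ^ (-s) =
      B.re ^ (-s) * ‖1 - I / 2 * ((t - 2 * B.im) / B.re : ℝ)‖ ^ (-s) := by
  rw [sub_I_div_two_mul_eq_mul hB, norm_mul, norm_real, Real.norm_of_nonneg hB.le,
    Real.mul_rpow hB.le (norm_nonneg _)]

lemma integrable_norm_sub_I_div_two_mul_rpow (hB : 0 < B.re) (hs : 1 < s) :
    Integrable fun t : ℝ => ‖B - I / 2 * t‖ ^ (-s) := by
  simp_rw [norm_sub_I_div_two_mul_rpow hB]
  exact (((integrable_norm_one_sub_I_div_two_mul_rpow hs).comp_div hB.ne').comp_sub_right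
    (2 * B.im)).const_mul _

lemma integral_norm_sub_I_div_two_mul_rpow (hB : 0 < B.re) :
    ∫ t : ℝ, ‖B - I / 2 * t‖ ^ (-s) = B.re ^ (1 - s) * ∫ t : ℝ, ‖1 - I / 2 * t‖ ^ (-s) := by
  simp_rw [norm_sub_I_div_two_mul_rpow hB]
  rw [integral_const_mul,
    integral_sub_right_eq_self (fun u => ‖1 - I / 2 * ((u / B.re : ℝ) : ℂ)‖ ^ (-s)),
    Measure.integral_comp_div (fun u => ‖1 - I / 2 * (u : ℂ)‖ ^ (-s)), smul_eq_mul,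
    abs_of_pos hB, ← mul_assoc, ← Real.rpow_add_one hB.ne']
  ring_nf

lemma integrable_sub_I_div_two_mul_cpow (hB : 0 < B.re) (hs : 1 < s) :
    Integrable fun t : ℝ => (B - I / 2 * t) ^ (-(s : ℂ)) := by
  refine (integrable_norm_iff ?_).mp ?_
  · refine Continuous.aestronglyMeasurable ?_
    exact continuous_iff_continuousAt.mpr fun t =>
      (continuousAt_cpow_const (sub_I_div_two_mul_mem_slitPlane hB t)).comp
        (f := fun t : ℝ => B - I / 2 * t) (by fun_prop)
  · simpa only [norm_cpow_neg_real] using integrable_norm_sub_I_div_two_mul_rpow hB hs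

lemma tendsto_norm_sub_I_div_two_mul_cocompact (B : ℂ) :
    Tendsto (fun t : ℝ => ‖B - I / 2 * t‖) (cocompact ℝ) atTop := by
  have h : Tendsto (fun t : ℝ => ‖t‖ / 2 - ‖B‖) (cocompact ℝ) atTop :=
    tendsto_atTop_add_const_right _ _ (tendsto_norm_cocompact_atTop.atTop_div_const two_pos)
  refine tendsto_atTop_mono (fun t => ?_) h
  have := norm_sub_norm_le (I / 2 * (t : ℂ)) B
  rw [norm_sub_rev] at this
  simp only [norm_mul, norm_div, norm_I, Complex.norm_two, norm_real] at this
  linarith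

lemma integral_sub_I_div_two_mul_cpow (hB : 0 < B.re) (hs : 1 < s) :
    ∫ t : ℝ, (B - I / 2 * t) ^ (-(s : ℂ)) = 0 := by
  set K : ℂ := 2 * I / (1 - s)
  set F : ℝ → ℂ := fun t => K * (B - I / 2 * t) ^ ((1 - s : ℝ) : ℂ)
  have hs' : (1 - s : ℂ) ≠ 0 := by exact_mod_cast (sub_neg.mpr hs).ne
  have hderiv : ∀ t : ℝ, HasDerivAt F ((B - I / 2 * t) ^ (-(s : ℂ))) t := by
    intro t
    have hline : HasDerivAt (fun z : ℂ => B - I / 2 * z) (-(I / 2)) t := by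
      simpa using ((hasDerivAt_id (t : ℂ)).const_mul (I / 2)).const_sub B
    convert ((hline.cpow_const (sub_I_div_two_mul_mem_slitPlane hB t)).const_mul K).comp_ofReal
      using 1
    have hI : K * (((1 - s : ℝ) : ℂ) * -(I / 2)) = 1 := by
      simp only [K]
      push_cast
      field_simp
      rw [I_sq]; ring
    rw [show ((1 - s : ℝ) : ℂ) - 1 = -(s : ℂ) by push_cast; ring]
    linear_combination (-(B - I / 2 * t) ^ (-(s : ℂ))) * hI
  have hlim : Tendsto F (cocompact ℝ) (𝓝 0) := by
    rw [tendsto_zero_iff_norm_tendsto_zero]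
    have h := ((tendsto_rpow_neg_atTop (sub_pos.mpr hs)).comp
      (tendsto_norm_sub_I_div_two_mul_cocompact B)).const_mul ‖K‖
    rw [mul_zero] at h
    refine h.congr fun t => ?_
    simp only [F, Function.comp_apply, norm_mul, norm_cpow_real, neg_sub]
  simpa using integral_of_hasDerivAt_of_tendsto hderiv (integrable_sub_I_div_two_mul_cpow hB hs)
    (hlim.mono_left atBot_le_cocompact) (hlim.mono_left atTop_le_cocompact)

end Line

section Kernel

variable {X : Type*} [MeasurableSpace X] {μ : Measure X} [SFinite μ] {B g : X → ℂ} {s δ : ℝ}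

lemma integrable_sub_I_div_two_mul_cpow_mul (hs : 1 < s) (hδ : 0 < δ) (hB : AEMeasurable B μ)
    (hBδ : ∀ᵐ x ∂μ, δ ≤ (B x).re) (hg : Integrable g μ) :
    Integrable (fun p : ℝ × X => (B p.2 - I / 2 * p.1) ^ (-(s : ℂ)) * g p.2)
      ((volume : Measure ℝ).prod μ) := by
  set K := ∫ t : ℝ, ‖1 - I / 2 * t‖ ^ (-s)
  have hmeas : AEStronglyMeasurable
      (fun p : ℝ × X => (B p.2 - I / 2 * p.1) ^ (-(s : ℂ)) * g p.2) ((volume : Measure ℝ).prod μ) :=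
    ((hB.comp_snd.sub (by fun_prop)).pow_const _).aestronglyMeasurable.mul hg.1.comp_snd
  rw [integrable_prod_iff' hmeas]
  constructor
  · filter_upwards [hBδ] with x hx
    exact (integrable_sub_I_div_two_mul_cpow (hδ.trans_le hx) hs).mul_const _
  · have hdom : Integrable (fun x => ‖g x‖ * (δ ^ (1 - s) * K)) μ := hg.norm.mul_const _
    refine hdom.mono' hmeas.norm.prod_swap.integral_prod_right' ?_
    filter_upwards [hBδ] with x hx
    have hBx : 0 < (B x).re := hδ.trans_le hx
    simp only [norm_mul, norm_cpow_neg_real]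
    rw [integral_mul_const, integral_norm_sub_I_div_two_mul_rpow hBx, Real.norm_of_nonneg
      (by positivity)]
    have hK : 0 ≤ K := integral_nonneg fun t => by positivity
    have hpow : (B x).re ^ (1 - s) ≤ δ ^ (1 - s) :=
      Real.rpow_le_rpow_of_nonpos hδ hx (by linarith)
    calc (B x).re ^ (1 - s) * K * ‖g x‖ = ‖g x‖ * ((B x).re ^ (1 - s) * K) := by ring
      _ ≤ ‖g x‖ * (δ ^ (1 - s) * K) := by gcongr

theorem integral_integral_sub_I_div_two_mul_cpow_mul (hs : 1 < s) (hδ : 0 < δ)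
    (hB : AEMeasurable B μ) (hBδ : ∀ᵐ x ∂μ, δ ≤ (B x).re) (hg : Integrable g μ) :
    ∫ t : ℝ, ∫ x, (B x - I / 2 * t) ^ (-(s : ℂ)) * g x ∂μ = 0 := by
  rw [integral_integral_swap (integrable_sub_I_div_two_mul_cpow_mul hs hδ hB hBδ hg)]
  refine integral_eq_zero_of_ae ?_
  filter_upwards [hBδ] with x hx
  rw [integral_mul_const, integral_sub_I_div_two_mul_cpow (hδ.trans_le hx) hs, zero_mul,
    Pi.zero_apply]

end Kernel

section SiegelDomain

variable {m : ℕ}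

lemma continuous_rho : Continuous (rho : Cm m × ℂ → ℝ) := by
  unfold rho nsq
  fun_prop

lemma isOpen_siegel (m : ℕ) : IsOpen (Siegel m) :=
  isOpen_lt continuous_const continuous_rho

lemma measurableSet_siegel (m : ℕ) : MeasurableSet (Siegel m) :=
  (isOpen_siegel m).measurableSet

lemma continuous_rho2_right (z : Cm m × ℂ) : Continuous (rho2 z) := by
  unfold rho2
  fun_prop

lemma rho_translate (z' : Cm m) (ζ : ℂ) (x : ℝ) : rho (z', x + ζ) = rho (z', ζ) := by
  simp [rho]

lemma rho2_translate (z' : Cm m) (ζ : ℂ) (w : Cm m × ℂ) (x : ℝ) :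
    rho2 (z', x + ζ) w = rho2 (z', ζ) w - I / 2 * x := by
  simp only [rho2]
  ring

-- `2 Re ρ(z,w) - ρ(z) - ρ(w) = |z' - w'|²`
lemma rho_add_rho_le_two_mul_re_rho2 (z w : Cm m × ℂ) : rho z + rho w ≤ 2 * (rho2 z w).re := by
  have hterm : ∀ j, 2 * (z.1 j * conj (w.1 j)).re ≤ normSq (z.1 j) + normSq (w.1 j) := by
    intro j
    simp only [mul_re, conj_re, conj_im, normSq_apply]
    nlinarith [sq_nonneg ((z.1 j).re - (w.1 j).re), sq_nonneg ((z.1 j).im - (w.1 j).im)]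
  have hsum := Finset.sum_le_sum fun j (_ : j ∈ Finset.univ) => hterm j
  rw [← Finset.mul_sum, Finset.sum_add_distrib] at hsum
  simp only [rho, rho2, nsq, sub_re, mul_re, re_sum, div_re, div_im, I_re, I_im, sub_im,
    conj_re, conj_im] at hsum ⊢
  norm_num at hsum ⊢
  linarith

end SiegelDomain

section Reproducing

variable {m : ℕ} {lam cl : ℝ} {f : Cm m × ℂ → ℂ}

lemma translate_mem_siegel_iff {z' : Cm m} {ζ : ℂ} (x : ℝ) :
    (z', x + ζ) ∈ Siegel m ↔ (z', ζ) ∈ Siegel m := by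
  change 0 < rho _ ↔ 0 < rho _
  rw [rho_translate]

lemma integrableOn_rho_rpow_mul (hf : ContinuousOn f (Siegel m))
    (hint : Integrable (fun z => ‖f z‖ * rho z ^ lam) (volume.restrict (Siegel m))) :
    IntegrableOn (fun z => ((rho z ^ lam : ℝ) : ℂ) * f z) (Siegel m) := by
  have hweight : ContinuousOn (fun z => ((rho z ^ lam : ℝ) : ℂ)) (Siegel m) :=
    continuous_ofReal.comp_continuousOn
      (continuous_rho.continuousOn.rpow_const fun z hz => Or.inl (ne_of_gt hz))
  refine hint.mono' ((hweight.mul hf).aestronglyMeasurable (measurableSet_siegel m)) ?_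
  refine ae_restrict_of_forall_mem (measurableSet_siegel m) fun z hz => le_of_eq ?_
  rw [norm_mul, norm_real, Real.norm_of_nonneg (Real.rpow_nonneg (le_of_lt hz) _), mul_comm]

theorem integral_translate_eq_zero_of_reproducing (hlam : -1 < lam)
    (hf : ContinuousOn f (Siegel m))
    (hint : Integrable (fun z => ‖f z‖ * rho z ^ lam) (volume.restrict (Siegel m)))
    (hrep : ∀ z ∈ Siegel m,
      f z = ∫ w in Siegel m,
        (cl : ℂ) * rho2 z w ^ (-(((m : ℝ) + 2 + lam : ℝ) : ℂ)) * f w * ((rho w ^ lam : ℝ) : ℂ))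
    {z' : Cm m} {ζ : ℂ} (hz : (z', ζ) ∈ Siegel m) :
    ∫ x : ℝ, f (z', x + ζ) = 0 := by
  have hs : 1 < (m : ℝ) + 2 + lam := by linarith [m.cast_nonneg (α := ℝ)]
  have hg := (integrableOn_rho_rpow_mul hf hint).const_mul (cl : ℂ)
  have hre : ∀ᵐ w ∂volume.restrict (Siegel m), rho (z', ζ) / 2 ≤ (rho2 (z', ζ) w).re :=
    ae_restrict_of_forall_mem (measurableSet_siegel m) fun w (hw : 0 < rho w) => by
      linarith [rho_add_rho_le_two_mul_re_rho2 (z', ζ) w]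
  calc ∫ x : ℝ, f (z', x + ζ)
      = ∫ x : ℝ, ∫ w in Siegel m, (rho2 (z', ζ) w - I / 2 * x) ^ (-(((m : ℝ) + 2 + lam : ℝ) : ℂ)) *
          ((cl : ℂ) * (((rho w ^ lam : ℝ) : ℂ) * f w)) := by
        refine integral_congr_ae (Eventually.of_forall fun x => ?_)
        dsimp only
        rw [hrep _ ((translate_mem_siegel_iff x).mpr hz)]
        refine integral_congr_ae (Eventually.of_forall fun w => ?_)
        simp only [rho2_translate]
        ring
    _ = 0 := integral_integral_sub_I_div_two_mul_cpow_mul hs (half_pos hz)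
        (continuous_rho2_right (z', ζ)).aemeasurable hre hg

end Reproducing

theorem integral_prod_eq_zero_of_integral_horizontal_eq_zero {E F : Type*} [MeasurableSpace E]
    {μ : Measure E} [SFinite μ] [NormedAddCommGroup F] [NormedSpace ℝ F] [CompleteSpace F]
    {G : E × ℂ → F} (hG : Integrable G (μ.prod volume))
    (hline : ∀ (e : E) (y : ℝ), ∫ x : ℝ, G (e, x + y * I) = 0) :
    ∫ p, G p ∂(μ.prod volume) = 0 := by
  rw [integral_prod G hG]
  refine integral_eq_zero_of_ae ?_
  filter_upwards [hG.prod_right_ae] with e he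
  have hmp := volume_preserving_equiv_real_prod.symm
  have he' : Integrable (fun p : ℝ × ℝ => G (e, measurableEquivRealProd.symm p))
      ((volume : Measure ℝ).prod volume) := by
    rw [← Measure.volume_eq_prod]
    exact (hmp.integrable_comp_emb measurableEquivRealProd.symm.measurableEmbedding).mpr he
  rw [← hmp.integral_comp', Measure.volume_eq_prod, integral_prod_symm _ he', Pi.zero_apply]
  refine integral_eq_zero_of_ae (Eventually.of_forall fun y => ?_)
  simpa [measurableEquivRealProd_symm_apply, mk_eq_add_mul_I] using hline e y

theorem stmt11_general (m : ℕ) (lam : ℝ) (hlam : -1 < lam)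
    (f : Cm m × ℂ → ℂ) (hol : DifferentiableOn ℂ f (Siegel m))
    (cl : ℝ)
    (hint : Integrable (fun z => ‖f z‖ * rho z ^ lam) (volume.restrict (Siegel m)))
    (hrep : ∀ z ∈ Siegel m,
      f z = ∫ w in Siegel m,
        (cl : ℂ) * rho2 z w ^ (-(((m : ℝ) + 2 + lam : ℝ) : ℂ)) * f w *
          ((rho w ^ lam : ℝ) : ℂ)) :
    (∫ z in Siegel m, ((cl * rho z ^ lam : ℝ) : ℂ) * f z) = 0 := by
  have hS := measurableSet_siegel m
  have hG : Integrable ((Siegel m).indicator fun z => ((cl * rho z ^ lam : ℝ) : ℂ) * f z)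
      (volume.prod volume) := by
    rw [← Measure.volume_eq_prod, integrable_indicator_iff hS]
    have h := (integrableOn_rho_rpow_mul hol.continuousOn hint).const_mul (cl : ℂ)
    simp only [ofReal_mul, mul_assoc]
    exact h
  rw [← integral_indicator hS, Measure.volume_eq_prod]
  refine integral_prod_eq_zero_of_integral_horizontal_eq_zero hG fun e y => ?_
  by_cases hz : ((e, y * I) : Cm m × ℂ) ∈ Siegel m
  · have hline : ∀ x : ℝ,
        (Siegel m).indicator (fun z => ((cl * rho z ^ lam : ℝ) : ℂ) * f z) (e, x + y * I) =
          ((cl * rho (e, y * I) ^ lam : ℝ) : ℂ) * f (e, x + y * I) := fun x => by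
      rw [Set.indicator_of_mem ((translate_mem_siegel_iff x).mpr hz), rho_translate]
    simp_rw [hline]
    rw [integral_const_mul,
      integral_translate_eq_zero_of_reproducing hlam hol.continuousOn hint hrep hz, mul_zero]
  · have hline : ∀ x : ℝ,
        (Siegel m).indicator (fun z => ((cl * rho z ^ lam : ℝ) : ℂ) * f z) (e, x + y * I) = 0 :=
      fun x => Set.indicator_of_notMem (mt (translate_mem_siegel_iff x).mp hz) _
    simp_rw [hline, integral_zero]

/-- the cancellation property `∫_U f dV_λ = 0` for f ∈ A¹_λ(U)
(here n = m+1 ≥ 2). -/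
theorem stmt11 (m : ℕ) (hm : 1 ≤ m) (lam : ℝ) (hlam : -1 < lam)
    (f : Cm m × ℂ → ℂ) (hol : DifferentiableOn ℂ f (Siegel m))
    (cl : ℝ)
    (hcl : cl = Real.Gamma ((m : ℝ) + 2 + lam) /
      (4 * Real.pi ^ (m + 1) * Real.Gamma (1 + lam)))
    (hint : Integrable (fun z => ‖f z‖ * rho z ^ lam) (volume.restrict (Siegel m)))
    (hrep : ∀ z ∈ Siegel m,
      f z = ∫ w in Siegel m,
        (cl : ℂ) * rho2 z w ^ (-(((m : ℝ) + 2 + lam : ℝ) : ℂ)) * f w *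
          ((rho w ^ lam : ℝ) : ℂ)) :
    (∫ z in Siegel m, ((cl * rho z ^ lam : ℝ) : ℂ) * f z) = 0 :=
  stmt11_general m lam hlam f hol cl hint hrep
end
end
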